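/- The number of large ν-Schröder paths equals twice the number of small ν-Schröder paths if and only if ν begins with a north step and ends with an east step. -/

import Mathlib

/-- Steps of a (Schröder) lattice path: north, east, diagonal. -/
inductive Step : Type
  | N | E | D
deriving DecidableEq, Repr

/-- Total horizontal displacement of a path. -/
def eLen (p : List Step) : ℕ := p.count Step.E + p.count Step.D

/-- Total vertical displacement of a path. -/
def nLen (p : List Step) : ℕ := p.count Step.N + p.count Step.D

/-- A lattice path uses only `N` and `E` steps. -/
def IsLatticePath (ν : List Step) : Prop := Step.D ∉ ν

/-- `colVal p x` is twice the starting height of the step of `p` crossing the vertical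
strip between abscissas `x` and `x+1`, plus `1` if that step is diagonal.  Comparing these
values columnwise is equivalent to comparing the heights of the paths over each strip. -/
def colVal : List Step → ℕ → ℕ
  | [], _ => 0
  | Step.N :: p, x => colVal p x + 2
  | Step.E :: _, 0 => 0
  | Step.E :: p, x+1 => colVal p x
  | Step.D :: _, 0 => 1
  | Step.D :: p, x+1 => colVal p x + 2

/-- `π` stays weakly above `ρ` (same endpoints intended). -/
def WeaklyAbove (π ρ : List Step) : Prop := ∀ x, colVal ρ x ≤ colVal π x

/-- Replace every peak (consecutive `NE`) of a path by a diagonal step; applied to `ν`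
this gives the path `μ` of the large ν-Schröder path definition. -/
def cutPeaks : List Step → List Step
  | [] => []
  | Step.N :: Step.E :: p => Step.D :: cutPeaks p
  | s :: p => s :: cutPeaks p

/-- A ν-Dyck path: an `N,E` path with the same endpoints as `ν` staying weakly above `ν`. -/
def IsNuDyck (ν π : List Step) : Prop :=
  Step.D ∉ π ∧ eLen π = eLen ν ∧ nLen π = nLen ν ∧ WeaklyAbove π ν

/-- A (small) ν-Schröder path: an `N,E,D` path with the same endpoints as `ν` staying weakly
above `ν` (this automatically forbids diagonal steps on the ν-diagonal). -/
def IsSmallSchroder (ν π : List Step) : Prop :=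
  eLen π = eLen ν ∧ nLen π = nLen ν ∧ WeaklyAbove π ν

/-- A large ν-Schröder path: an `N,E,D` path with the same endpoints as `ν` staying weakly
above the path obtained from `ν` by replacing each peak by a diagonal step. -/
def IsLargeSchroder (ν π : List Step) : Prop :=
  eLen π = eLen ν ∧ nLen π = nLen ν ∧ WeaklyAbove π (cutPeaks ν)

/-- Number of peaks (consecutive `NE` pairs). -/
def peaks (p : List Step) : ℕ := (p.zip p.tail).count (Step.N, Step.E)

/-- Number of valleys (consecutive `EN` pairs). -/
def valleys (p : List Step) : ℕ := (p.zip p.tail).count (Step.E, Step.N)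

/-- Lattice points at which valleys of a path occur (starting the path at `(x,y)`). -/
def valleyPts : List Step → ℕ → ℕ → List (ℕ × ℕ)
  | [], _, _ => []
  | Step.E :: p, x, y =>
      (if p.head? = some Step.N then [(x+1, y)] else []) ++ valleyPts p (x+1) y
  | Step.N :: p, x, y => valleyPts p x (y+1)
  | Step.D :: p, x, y => valleyPts p (x+1) (y+1)

/-- Lattice points at which high peaks (peaks strictly above `ν`) of a path occur. -/
def highPeakPts (ν : List Step) : List Step → ℕ → ℕ → List (ℕ × ℕ)
  | [], _, _ => []
  | Step.N :: p, x, y =>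
      (if p.head? = some Step.E ∧ colVal ν x < 2*(y+1) then [(x, y+1)] else []) ++
        highPeakPts ν p x (y+1)
  | Step.E :: p, x, y => highPeakPts ν p (x+1) y
  | Step.D :: p, x, y => highPeakPts ν p (x+1) (y+1)

/-- Number of high peaks of `π` relative to `ν`. -/
def highPeaks (ν π : List Step) : ℕ := (highPeakPts ν π 0 0).length

/-- j-th ν-Narayana number: number of ν-Dyck paths with exactly `j` valleys. -/
noncomputable def Nar (ν : List Step) (j : ℕ) : ℕ :=
  Nat.card {π : List Step // IsNuDyck ν π ∧ valleys π = j}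

/-- Number of small ν-Schröder paths with exactly `i` diagonal steps. -/
noncomputable def schNum (ν : List Step) (i : ℕ) : ℕ :=
  Nat.card {π : List Step // IsSmallSchroder ν π ∧ π.count Step.D = i}

/-- `lowH ν x` is the lowest height of a point of `ν` at abscissa `x`. -/
def lowH : List Step → ℕ → ℕ
  | _, 0 => 0
  | [], _+1 => 0
  | Step.N :: p, x+1 => lowH p (x+1) + 1
  | Step.E :: p, x+1 => lowH p x
  | Step.D :: p, x+1 => lowH p x + 1

/-- The lowest lattice path from `(0,0)` to `(b,a)` weakly above the line segment
from `(0,0)` to `(b,a)`. -/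
def nuAB (a b : ℕ) : List Step :=
  (List.range b).flatMap (fun x =>
    List.replicate (((x+1)*a + b - 1)/b - (x*a + b - 1)/b) Step.N ++ [Step.E])

/-- Number of large rational `(a,b)`-Schröder paths with `i` diagonal steps. -/
noncomputable def largeCount (a b i : ℕ) : ℕ :=
  Nat.card {π : List Step // IsLargeSchroder (nuAB a b) π ∧ π.count Step.D = i}

/-- Number of small rational `(a,b)`-Schröder paths with `i` diagonal steps. -/
noncomputable def smallCount (a b i : ℕ) : ℕ :=
  Nat.card {π : List Step // IsSmallSchroder (nuAB a b) π ∧ π.count Step.D = i}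

/-- Binomial coefficient with an integer lower entry (zero when negative). -/
def chooseZ (n : ℕ) (k : ℤ) : ℕ := if 0 ≤ k then n.choose k.toNat else 0

/-- The region weakly above `ν` in the rectangle `[0,b] × [0,a]`. -/
def InRegion (ν : List Step) (p : ℕ × ℕ) : Prop :=
  p.1 ≤ eLen ν ∧ p.2 ≤ nLen ν ∧ lowH ν p.1 ≤ p.2

/-- Two points of the region are ν-incompatible if one is strictly southwest of the other and
the rectangle they span lies in the region (equivalently its bottom-right corner does). -/
def Incompat (ν : List Step) (p q : ℕ × ℕ) : Prop :=
  ((p.1 < q.1 ∧ p.2 < q.2) ∨ (q.1 < p.1 ∧ q.2 < p.2)) ∧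
    InRegion ν (max p.1 q.1, min p.2 q.2)

/-- A ν-binary tree: a maximal set of pairwise ν-compatible points of the region. -/
def IsBinaryTree (ν : List Step) (T : Finset (ℕ × ℕ)) : Prop :=
  (∀ p ∈ T, InRegion ν p) ∧ (∀ p ∈ T, ∀ q ∈ T, ¬ Incompat ν p q) ∧
    ∀ r, InRegion ν r → (∀ p ∈ T, ¬ Incompat ν r p) → r ∈ T

/-- A ν-Schröder tree: pairwise ν-compatible points of the region containing the root
`(0,a)` and meeting every row and every column. -/
def IsSchroderTree (ν : List Step) (T : Finset (ℕ × ℕ)) : Prop :=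
  (∀ p ∈ T, InRegion ν p) ∧ (∀ p ∈ T, ∀ q ∈ T, ¬ Incompat ν p q) ∧
    (0, nLen ν) ∈ T ∧ (∀ y ≤ nLen ν, ∃ p ∈ T, p.2 = y) ∧ (∀ x ≤ eLen ν, ∃ p ∈ T, p.1 = x)

/-- One contraction step: delete a node, provided the result is still a ν-Schröder tree. -/
def ContractStep (ν : List Step) (T T' : Finset (ℕ × ℕ)) : Prop :=
  ∃ q ∈ T, T' = T.erase q ∧ IsSchroderTree ν T'

/-- `p` is a leaf of the (plane tree associated to the) node set `T`: no node strictly below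
it in its column and none strictly to its right in its row. -/
def IsLeafIn (T : Finset (ℕ × ℕ)) (p : ℕ × ℕ) : Prop :=
  (∀ q ∈ T, ¬(q.1 = p.1 ∧ q.2 < p.2)) ∧ (∀ q ∈ T, ¬(q.2 = p.2 ∧ p.1 < q.1))

/-- Starting points of vertical runs and ending points of horizontal runs of `ν`. -/
def leafPts (ν : List Step) : Finset (ℕ × ℕ) :=
  (valleyPts ν 0 0).toFinset ∪ (if ν.head? = some Step.N then {((0 : ℕ), (0 : ℕ))} else ∅) ∪
    (if ν.getLast? = some Step.E then {(eLen ν, nLen ν)} else ∅)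

/-- `horizNu ν x y`: maximal number of east steps that can be placed starting at `(x,y)`
before crossing `ν` (staying within the bounding rectangle). -/
def horizNu (ν : List Step) (x y : ℕ) : ℕ :=
  ((Finset.Icc 1 (eLen ν - x)).filter (fun k => lowH ν (x + k) ≤ y)).card

/-- No `N` step of the given path (started at `(x,y)`) has initial point with
`horizNu`-value `h`. -/
def noNAt (ν : List Step) (h : ℕ) : List Step → ℕ → ℕ → Prop
  | [], _, _ => True
  | Step.N :: p, x, y => horizNu ν x y ≠ h ∧ noNAt ν h p x (y+1)
  | Step.E :: p, x, y => noNAt ν h p (x+1) y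
  | Step.D :: p, x, y => noNAt ν h p (x+1) (y+1)

/-- Right contraction: replace a consecutive `EN` pair (a valley) by a `D` step. -/
def RightC (μ lam : List Step) : Prop :=
  ∃ p q, μ = p ++ Step.E :: Step.N :: q ∧ lam = p ++ Step.D :: q

/-- Left contraction: delete an `E` step together with the most recent preceding `N` step
whose initial point has the same `horizNu` statistic as the initial point of the `E` step,
shift the intermediate subpath, and place a `D` step at the initial point of the `N` step. -/
def LeftC (ν μ lam : List Step) : Prop :=
  ∃ p m q, μ = p ++ Step.N :: (m ++ Step.E :: q) ∧ lam = p ++ Step.D :: (m ++ q) ∧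
    horizNu ν (eLen p) (nLen p)
      = horizNu ν (eLen (p ++ Step.N :: m)) (nLen (p ++ Step.N :: m)) ∧
    noNAt ν (horizNu ν (eLen (p ++ Step.N :: m)) (nLen (p ++ Step.N :: m)))
      m (eLen p) (nLen p + 1)

/-- Diagonal contraction: delete an `E` step ending at the initial point `r` of a `D` step,
together with the most recent preceding `N` step whose initial point `s` satisfies
`horizNu s = horizNu r`, shift the intermediate subpath, and place a `D` step at `s`. -/
def DiagC (ν μ lam : List Step) : Prop :=
  ∃ p m q, μ = p ++ Step.N :: (m ++ Step.E :: Step.D :: q) ∧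
    lam = p ++ Step.D :: (m ++ Step.D :: q) ∧
    horizNu ν (eLen p) (nLen p)
      = horizNu ν (eLen (p ++ Step.N :: m) + 1) (nLen (p ++ Step.N :: m)) ∧
    noNAt ν (horizNu ν (eLen (p ++ Step.N :: m) + 1) (nLen (p ++ Step.N :: m)))
      m (eLen p) (nLen p + 1)

/-- Cover relation of the contraction poset of ν-Schröder paths. -/
def Covers (ν μ lam : List Step) : Prop :=
  IsSmallSchroder ν μ ∧ IsSmallSchroder ν lam ∧
    (RightC μ lam ∨ LeftC ν μ lam ∨ DiagC ν μ lam)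

/-- The Morse matching: `σ` (having a `D` step preceded by no valley) is matched with the
path `π` obtained by replacing the first such `D` step by `EN`. -/
def MorseM (ν : List Step) : Set (List Step × List Step) :=
  { z | ∃ p q, Step.D ∉ p ∧ valleys p = 0 ∧
      z.2 = p ++ Step.D :: q ∧ z.1 = p ++ Step.E :: Step.N :: q ∧ IsSmallSchroder ν z.2 }

/-- Twice the area between a small ν-Schröder path and `ν`. -/
def area2 (ν π : List Step) : ℕ :=
  ∑ x ∈ Finset.range (eLen ν), (colVal π x - colVal ν x)

/-- An `(I,J̄)`-forest: increasing, non-crossing arcs. -/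
def IsIJForest (I J : Finset ℕ) (F : Finset (ℕ × ℕ)) : Prop :=
  (∀ a ∈ F, a.1 ∈ I ∧ a.2 ∈ J ∧ a.1 < a.2) ∧
    (∀ a ∈ F, ∀ a' ∈ F, ¬(a.1 < a'.1 ∧ a'.1 < a.2 ∧ a.2 < a'.2))

/-- A covering `(I,J̄)`-forest: contains the arc `(1,n)` and has no isolated node. -/
def IsCoveringForest (n : ℕ) (I J : Finset ℕ) (F : Finset (ℕ × ℕ)) : Prop :=
  IsIJForest I J F ∧ (1, n) ∈ F ∧
    (∀ i ∈ I, ∃ a ∈ F, a.1 = i) ∧ (∀ j ∈ J, ∃ a ∈ F, a.2 = j)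

/-- The lattice path read off from the interleaving of `I` and `J̄` (elements `2,…,n-1`,
`E` for elements of `I`, `N` for the others). -/
def nuOf (n : ℕ) (I : Finset ℕ) : List Step :=
  (List.range' 2 (n - 2)).map (fun k => if k ∈ I then Step.E else Step.N)

/-!
Over the strip between abscissas `x` and `x+1` a path has either an `E` step at some height
`h` (`colVal = 2h`) or a `D` step from `h` to `h+1` (`colVal = 2h+1`). Small paths are thus
the paths dominating the even profile `w = colVal ν`, and large ones those dominating
`W = colVal (cutPeaks ν)`, which is `w` lowered by one over each strip where `ν` rises.
Sorting the paths ending at `(x,t)` by their last step gives a strip-by-strip recursion for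
the numbers `s(x,t)` and `l(x,t)` of small and large paths ending there; we follow the defect
`2 s(x,t) - l(x,t) - l(x,t-1)`.

On the line `x = 0` the defect is `1` at height `0` and `0` above. It stays nonnegative, and
crossing a strip does not decrease it at heights not below the step of `ν` over that strip.
If `ν` starts with `N`, the first strip is a rise above height `0` and the defect vanishes
from then on: where `W = w`, `ν` is flat, so no large path ends at that abscissa below `ν`.
Then `2 · #small = #large + l(b, a-1)`, and a large path ends at `(b, a-1)` exactly when `ν`
ends with `N` (`ν` without its last step is one). If `ν` starts with `E`, the defect is
positive at every height after the first strip, so `#large < 2 · #small`.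
-/

namespace Step

instance : Fintype Step := ⟨{N, E, D}, fun s => by cases s <;> simp⟩

theorem sum_univ {M : Type*} [AddCommMonoid M] (f : Step → M) : ∑ s, f s = f N + f E + f D := by
  simp [Finset.univ, Fintype.elems, add_assoc]

end Step

open Step

section Lengths

@[simp] theorem eLen_nil : eLen [] = 0 := rfl
@[simp] theorem nLen_nil : nLen [] = 0 := rfl

@[simp] theorem eLen_cons (s : Step) (p : List Step) :
    eLen (s :: p) = eLen p + if s = N then 0 else 1 := by
  cases s <;> simp [eLen] <;> omega

@[simp] theorem nLen_cons (s : Step) (p : List Step) :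
    nLen (s :: p) = nLen p + if s = E then 0 else 1 := by
  cases s <;> simp [nLen] <;> omega

@[simp] theorem eLen_append (p q : List Step) : eLen (p ++ q) = eLen p + eLen q := by
  simp only [eLen, List.count_append]; omega

@[simp] theorem nLen_append (p q : List Step) : nLen (p ++ q) = nLen p + nLen q := by
  simp only [nLen, List.count_append]; omega

theorem length_le_eLen_add_nLen (p : List Step) : p.length ≤ eLen p + nLen p := by
  induction p with
  | nil => simp
  | cons s p ih => cases s <;> simp <;> omega

end Lengths

section ColVal

@[simp] theorem colVal_nil (x : ℕ) : colVal [] x = 0 := rfl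
@[simp] theorem colVal_cons_N (p : List Step) (x : ℕ) : colVal (N :: p) x = colVal p x + 2 := rfl
@[simp] theorem colVal_cons_E_zero (p : List Step) : colVal (E :: p) 0 = 0 := rfl
@[simp] theorem colVal_cons_E_succ (p : List Step) (x : ℕ) :
    colVal (E :: p) (x + 1) = colVal p x := rfl
@[simp] theorem colVal_cons_D_zero (p : List Step) : colVal (D :: p) 0 = 1 := rfl
@[simp] theorem colVal_cons_D_succ (p : List Step) (x : ℕ) :
    colVal (D :: p) (x + 1) = colVal p x + 2 := rfl

theorem colVal_append_of_lt {ρ : List Step} {x : ℕ} (τ : List Step) (hx : x < eLen ρ) :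
    colVal (ρ ++ τ) x = colVal ρ x := by
  induction ρ generalizing x with
  | nil => simp at hx
  | cons s ρ ih =>
    cases s <;> cases x <;> simp_all

theorem colVal_append_E (ρ τ : List Step) : colVal (ρ ++ E :: τ) (eLen ρ) = 2 * nLen ρ := by
  induction ρ with
  | nil => rfl
  | cons s ρ ih => cases s <;> simp [ih] <;> ring

theorem colVal_append_D (ρ τ : List Step) :
    colVal (ρ ++ D :: τ) (eLen ρ) = 2 * nLen ρ + 1 := by
  induction ρ with
  | nil => rfl
  | cons s ρ ih => cases s <;> simp [ih] <;> ring

theorem colVal_of_eLen_le {p : List Step} {x : ℕ} (hx : eLen p ≤ x) : colVal p x = 2 * nLen p := by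
  induction p generalizing x with
  | nil => simp
  | cons s p ih =>
    cases s <;> cases x <;> simp_all <;> omega

theorem colVal_le_two_nLen (p : List Step) (x : ℕ) : colVal p x ≤ 2 * nLen p := by
  induction p generalizing x with
  | nil => simp
  | cons s p ih => cases s <;> cases x <;> simp <;> grind

theorem even_colVal {ν : List Step} (hν : D ∉ ν) (x : ℕ) : Even (colVal ν x) := by
  induction ν generalizing x with
  | nil => simp
  | cons s p ih =>
    simp only [List.mem_cons, not_or] at hν
    cases s <;> cases x <;> simp_all [Nat.even_add]

end ColVal

theorem Nat.card_subtype_eq_sum_card_append_singleton {α : Type*} [Fintype α] {P : List α → Prop}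
    [Finite {l // P l}] (hnil : ¬ P []) :
    Nat.card {l // P l} = ∑ a, Nat.card {l // P (l ++ [a])} := by
  have (a : α) : Finite {l // P (l ++ [a])} :=
    Finite.of_injective (fun l => (⟨l.1 ++ [a], l.2⟩ : {l // P l}))
      fun l l' h => Subtype.ext (List.append_cancel_right (congrArg Subtype.val h))
  have ne_nil (l : {l // P l}) : l.1 ≠ [] := fun h => hnil (h ▸ l.2)
  let e : {l // P l} ≃ Σ a, {l // P (l ++ [a])} :=
    { toFun l := ⟨l.1.getLast (ne_nil l),
        ⟨l.1.dropLast, by rw [List.dropLast_append_getLast]; exact l.2⟩⟩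
      invFun p := ⟨p.2.1 ++ [p.1], p.2.2⟩
      left_inv l := Subtype.ext (List.dropLast_append_getLast _)
      right_inv p := Sigma.subtype_ext (by simp) (by simp) }
  rw [Nat.card_congr e, Nat.card_sigma]

theorem Nat.card_subtype_and_const {α : Type*} (p : α → Prop) (c : Prop) [Decidable c] :
    Nat.card {a // p a ∧ c} = if c then Nat.card {a // p a} else 0 := by
  split_ifs with hc <;> simp [hc]

section Counting

def PathAbove (w : ℕ → ℕ) (x t : ℕ) (π : List Step) : Prop :=
  eLen π = x ∧ nLen π = t ∧ ∀ y < x, w y ≤ colVal π y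

/-- If `f s` counts the paths ending at `(x,s)`, then `colStep v f t` counts their extensions
ending at `(x+1,t)` whose step over the strip `x` is no lower than `v`: the last step is `N`,
or an `E` from height `t` (allowed iff `v ≤ 2t`), or a `D` from height `t-1`
(allowed iff `v ≤ 2t-1`). -/
def colStep (v : ℕ) (f : ℕ → ℕ) : ℕ → ℕ
  | 0 => if v = 0 then f 0 else 0
  | t + 1 => colStep v f t + (if v ≤ 2 * (t + 1) then f (t + 1) else 0) +
      (if v ≤ 2 * t + 1 then f t else 0)

def pathCount (w : ℕ → ℕ) : ℕ → ℕ → ℕ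
  | 0 => fun _ => 1
  | x + 1 => colStep (w x) (pathCount w x)

theorem pathAbove_append_N {w : ℕ → ℕ} {x t : ℕ} {ρ : List Step} :
    PathAbove w x t (ρ ++ [N]) ↔ 0 < t ∧ PathAbove w x (t - 1) ρ := by
  simp only [PathAbove, eLen_append, nLen_append, eLen_cons, nLen_cons, eLen_nil, nLen_nil,
    reduceCtorEq, ↓reduceIte, add_zero, zero_add]
  constructor
  · rintro ⟨rfl, rfl, hw⟩
    refine ⟨by omega, rfl, by omega, fun y hy => ?_⟩
    simpa [colVal_append_of_lt [N] hy] using hw y hy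
  · rintro ⟨ht, rfl, hn, hw⟩
    refine ⟨rfl, by omega, fun y hy => ?_⟩
    simpa [colVal_append_of_lt [N] hy] using hw y hy

theorem pathAbove_append_E {w : ℕ → ℕ} {x t : ℕ} {ρ : List Step} :
    PathAbove w x t (ρ ++ [E]) ↔ 0 < x ∧ PathAbove w (x - 1) t ρ ∧ w (x - 1) ≤ 2 * t := by
  simp only [PathAbove, eLen_append, nLen_append, eLen_cons, nLen_cons, eLen_nil, nLen_nil,
    reduceCtorEq, ↓reduceIte, add_zero, zero_add]
  constructor
  · rintro ⟨rfl, rfl, hw⟩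
    refine ⟨by omega, ⟨rfl, rfl, fun y hy => ?_⟩, ?_⟩
    · simpa [colVal_append_of_lt [E] (by simpa using hy : y < eLen ρ)] using hw y (by omega)
    · simpa [colVal_append_E] using hw (eLen ρ) (by omega)
  · rintro ⟨hx, ⟨he, rfl, hw⟩, hlast⟩
    refine ⟨by omega, rfl, fun y hy => ?_⟩
    obtain hy | rfl := Nat.lt_or_eq_of_le (Nat.le_of_lt_succ (by omega : y < eLen ρ + 1))
    · simpa [colVal_append_of_lt [E] hy] using hw y (by omega)
    · simpa [colVal_append_E, ← he] using hlast

theorem pathAbove_append_D {w : ℕ → ℕ} {x t : ℕ} {ρ : List Step} :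
    PathAbove w x t (ρ ++ [D]) ↔
      0 < x ∧ 0 < t ∧ PathAbove w (x - 1) (t - 1) ρ ∧ w (x - 1) ≤ 2 * (t - 1) + 1 := by
  simp only [PathAbove, eLen_append, nLen_append, eLen_cons, nLen_cons, eLen_nil, nLen_nil,
    reduceCtorEq, ↓reduceIte, zero_add]
  constructor
  · rintro ⟨rfl, rfl, hw⟩
    refine ⟨by omega, by omega, ⟨rfl, rfl, fun y hy => ?_⟩, ?_⟩
    · simpa [colVal_append_of_lt [D] (by simpa using hy : y < eLen ρ)] using hw y (by omega)
    · simpa [colVal_append_D] using hw (eLen ρ) (by omega)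
  · rintro ⟨hx, ht, ⟨he, hn, hw⟩, hlast⟩
    refine ⟨by omega, by omega, fun y hy => ?_⟩
    obtain hy | rfl := Nat.lt_or_eq_of_le (Nat.le_of_lt_succ (by omega : y < eLen ρ + 1))
    · simpa [colVal_append_of_lt [D] hy] using hw y (by omega)
    · simpa [colVal_append_D, ← he, hn] using hlast

instance (w : ℕ → ℕ) (x t : ℕ) : Finite {π // PathAbove w x t π} :=
  ((List.finite_length_le Step (x + t)).subset fun π hπ => by
    simpa [← hπ.1, ← hπ.2.1] using length_le_eLen_add_nLen π).to_subtype

theorem card_pathAbove (w : ℕ → ℕ) (x t : ℕ) :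
    Nat.card {π // PathAbove w x t π} = pathCount w x t := by
  induction x generalizing t <;> induction t
  case zero.zero =>
    have h (π : List Step) : PathAbove w 0 0 π ↔ π = [] := by
      refine ⟨fun ⟨he, hn, _⟩ => List.eq_nil_of_length_eq_zero ?_, fun h => by simp [h, PathAbove]⟩
      have := length_le_eLen_add_nLen π
      omega
    simp [h, pathCount]
  all_goals
    rw [Nat.card_subtype_eq_sum_card_append_singleton (by simp [PathAbove]), Step.sum_univ]
    simp [*, pathAbove_append_N, pathAbove_append_E, pathAbove_append_D, pathCount, colStep,
      Nat.card_subtype_and_const]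

end Counting

section Defect

def defect (f g : ℕ → ℕ) : ℕ → ℤ
  | 0 => 2 * f 0 - g 0
  | t + 1 => 2 * f (t + 1) - g (t + 1) - g t

variable {v V : ℕ} {f g : ℕ → ℕ}

theorem colStep_eq_zero {t : ℕ} (ht : 2 * t < v) : colStep v f t = 0 := by
  induction t with
  | zero => simp only [colStep]; split_ifs <;> omega
  | succ t ih => simp only [colStep, ih (by omega)]; split_ifs <;> omega

theorem defect_colStep_zero (hv : Even v) (hV : V = v ∨ V + 1 = v) :
    defect (colStep v f) (colStep V g) 0 = if v = 0 then defect f g 0 else 0 := by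
  obtain ⟨k, rfl⟩ := hv
  simp only [defect, colStep]
  split_ifs <;> omega

theorem defect_colStep_succ_ge (hv : Even v) (hV : v ≤ V + 1) (t : ℕ) :
    defect (colStep v f) (colStep V g) t + (if v ≤ 2 * (t + 1) then defect f g (t + 1) else 0) +
        (if v ≤ 2 * t + 1 then defect f g t else 0) ≤
      defect (colStep v f) (colStep V g) (t + 1) := by
  obtain ⟨k, rfl⟩ := hv
  cases t <;> simp only [defect, colStep] <;> push_cast <;> split_ifs <;> omega

theorem defect_colStep_succ_eq (hv : Even v) (hV : V = v ∨ V + 1 = v)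
    (hg : V = v → ∀ s, 2 * s + 2 ≤ v → g s = 0) (t : ℕ) :
    defect (colStep v f) (colStep V g) (t + 1) =
      defect (colStep v f) (colStep V g) t + (if v ≤ 2 * (t + 1) then defect f g (t + 1) else 0) +
        (if v ≤ 2 * t + 1 then defect f g t else 0) := by
  obtain ⟨k, rfl⟩ := hv
  rcases hV with rfl | hV
  · cases t with
    | zero =>
      have := hg rfl 0
      simp only [defect, colStep]; push_cast; split_ifs <;> omega
    | succ s =>
      have := hg rfl s
      have := hg rfl (s + 1)
      simp only [defect, colStep]; push_cast; split_ifs <;> omega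
  · cases t <;> simp only [defect, colStep] <;> push_cast <;> split_ifs <;> omega

theorem defect_colStep_nonneg (hv : Even v) (hV : V = v ∨ V + 1 = v)
    (hd : ∀ t, 0 ≤ defect f g t) (t : ℕ) : 0 ≤ defect (colStep v f) (colStep V g) t := by
  induction t with
  | zero => rw [defect_colStep_zero hv hV]; split_ifs; exacts [hd 0, le_rfl]
  | succ t ih =>
    have := defect_colStep_succ_ge hv (V := V) (by omega) t (f := f) (g := g)
    split_ifs at this <;> linarith [hd t, hd (t + 1)]

theorem monotone_defect_colStep (hv : Even v) (hV : v ≤ V + 1) (hd : ∀ t, 0 ≤ defect f g t) :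
    Monotone (defect (colStep v f) (colStep V g)) :=
  monotone_nat_of_le_succ fun t => by
    have := defect_colStep_succ_ge hv hV t (f := f) (g := g)
    split_ifs at this <;> linarith [hd t, hd (t + 1)]

theorem defect_le_defect_colStep (hv : Even v) (hV : V = v ∨ V + 1 = v)
    (hd : ∀ t, 0 ≤ defect f g t) {t : ℕ} (ht : v ≤ 2 * t) :
    defect f g t ≤ defect (colStep v f) (colStep V g) t := by
  cases t with
  | zero => rw [defect_colStep_zero hv hV, if_pos (by omega)]
  | succ t =>
    have := defect_colStep_succ_ge hv (V := V) (by omega) t (f := f) (g := g)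
    rw [if_pos ht] at this
    split_ifs at this <;> linarith [hd t, defect_colStep_nonneg hv hV hd t]

theorem defect_colStep_eq_zero (hv : Even v) (hV : V = v ∨ V + 1 = v)
    (hg : V = v → ∀ s, 2 * s + 2 ≤ v → g s = 0) (hd : ∀ t, v ≤ 2 * t → defect f g t = 0)
    (t : ℕ) : defect (colStep v f) (colStep V g) t = 0 := by
  induction t with
  | zero => rw [defect_colStep_zero hv hV]; split_ifs; exacts [hd 0 (by omega), rfl]
  | succ t ih =>
    obtain ⟨k, rfl⟩ := hv
    rw [defect_colStep_succ_eq ⟨k, rfl⟩ hV hg, ih]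
    have h₁ := hd (t + 1)
    have h₂ : k + k ≤ 2 * t + 1 → defect f g t = 0 := fun h => hd t (by omega)
    split_ifs <;> simp_all

end Defect

section Profiles

/-- The profile `w` lowered by one over each strip where it rises, reading `w(-1)` as `0`. -/
def cutProfile (w : ℕ → ℕ) : ℕ → ℕ
  | 0 => w 0 - 1
  | y + 1 => w (y + 1) - if w y < w (y + 1) then 1 else 0

theorem cutProfile_eq_or (w : ℕ → ℕ) (y : ℕ) :
    cutProfile w y = w y ∨ cutProfile w y + 1 = w y := by
  cases y
  · simp only [cutProfile]; omega
  · simp only [cutProfile]; split_ifs <;> omega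

variable {w W : ℕ → ℕ}

theorem pathCount_cutProfile_eq_zero {x s : ℕ} (hflat : cutProfile w x = w x)
    (hs : 2 * s + 2 ≤ w x) : pathCount (cutProfile w) x s = 0 := by
  cases x with
  | zero => simp only [cutProfile] at hflat; omega
  | succ y =>
    refine colStep_eq_zero ?_
    have := cutProfile_eq_or w y
    simp only [cutProfile] at hflat
    split_ifs at hflat <;> omega

theorem defect_pathCount_nonneg (hw : ∀ y, Even (w y)) (hW : ∀ y, W y = w y ∨ W y + 1 = w y)
    (x t : ℕ) : 0 ≤ defect (pathCount w x) (pathCount W x) t := by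
  induction x generalizing t with
  | zero => cases t <;> simp [defect, pathCount]
  | succ x ih => exact defect_colStep_nonneg (hw x) (hW x) ih t

theorem defect_pathCount_pos (hw : ∀ y, Even (w y)) (hW : ∀ y, W y = w y ∨ W y + 1 = w y)
    (h0 : w 0 = 0) {x t : ℕ} (hx : 0 < x) (ht : ∀ y < x, w y ≤ 2 * t) :
    0 < defect (pathCount w x) (pathCount W x) t := by
  induction x with
  | zero => omega
  | succ x ih =>
    have hd := defect_pathCount_nonneg hw hW x
    rcases x with _ | x
    · calc (0 : ℤ) < defect (pathCount w 0) (pathCount W 0) 0 := by simp [defect, pathCount]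
        _ ≤ defect (pathCount w 1) (pathCount W 1) 0 :=
          defect_le_defect_colStep (hw 0) (hW 0) hd (by simp [h0])
        _ ≤ defect (pathCount w 1) (pathCount W 1) t :=
          monotone_defect_colStep (hw 0) (by have := hW 0; omega) hd (Nat.zero_le t)
    · exact (ih (by omega) fun y hy => ht y (by omega)).trans_le
        (defect_le_defect_colStep (hw _) (hW _) hd (ht _ (by omega)))

theorem defect_pathCount_cutProfile_eq_zero (hw : ∀ y, Even (w y)) (h0 : 0 < w 0) (x t : ℕ) :
    defect (pathCount w (x + 1)) (pathCount (cutProfile w) (x + 1)) t = 0 := by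
  induction x generalizing t with
  | zero =>
    refine defect_colStep_eq_zero (hw 0) (cutProfile_eq_or w 0)
      (fun h => absurd h (by simp only [cutProfile]; omega)) (fun t ht => ?_) t
    cases t with
    | zero => omega
    | succ t => simp [defect, pathCount]
  | succ x ih =>
    exact defect_colStep_eq_zero (hw _) (cutProfile_eq_or w _)
      (fun h _ hs => pathCount_cutProfile_eq_zero h hs) (fun t _ => ih t) t

end Profiles

section CutPeaks

theorem eLen_cutPeaks (ν : List Step) : eLen (cutPeaks ν) = eLen ν := by
  induction ν using cutPeaks.induct with
  | case1 => rfl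
  | case2 p ih => simp [cutPeaks, ih]
  | case3 s p hne ih => rw [cutPeaks.eq_3 s p hne]; simp [ih]

theorem nLen_cutPeaks (ν : List Step) : nLen (cutPeaks ν) = nLen ν := by
  induction ν using cutPeaks.induct with
  | case1 => rfl
  | case2 p ih => simp [cutPeaks, ih]
  | case3 s p hne ih => rw [cutPeaks.eq_3 s p hne]; simp [ih]

theorem cutProfile_colVal_cons_E (p : List Step) (y : ℕ) :
    cutProfile (colVal (E :: p)) (y + 1) = cutProfile (colVal p) y := by
  cases y
  · show colVal p 0 - (if 0 < colVal p 0 then 1 else 0) = colVal p 0 - 1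
    split <;> omega
  · rfl

theorem cutProfile_colVal_cons_N_zero (p : List Step) :
    cutProfile (colVal (N :: p)) 0 = colVal p 0 + 1 := by
  simp [cutProfile]

theorem cutProfile_colVal_cons_N_succ (p : List Step) (y : ℕ) :
    cutProfile (colVal (N :: p)) (y + 1) = cutProfile (colVal p) (y + 1) + 2 := by
  simp only [cutProfile, colVal_cons_N, Nat.add_lt_add_iff_right]
  split_ifs <;> omega

theorem colVal_cutPeaks {ν : List Step} (hν : D ∉ ν) {x : ℕ} (hx : x < eLen ν) :
    colVal (cutPeaks ν) x = cutProfile (colVal ν) x := by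
  induction ν using cutPeaks.induct generalizing x with
  | case1 => simp at hx
  | case2 p ih =>
    rcases x with _ | y
    · rfl
    · simp only [List.mem_cons, reduceCtorEq, false_or] at hν
      rw [cutPeaks, colVal_cons_D_succ, ih hν (by simpa using hx),
        cutProfile_colVal_cons_N_succ, cutProfile_colVal_cons_E]
  | case3 s p hne ih =>
    rw [cutPeaks.eq_3 s p hne]
    simp only [List.mem_cons, not_or] at hν
    cases s with
    | D => exact absurd rfl hν.1
    | E =>
      rcases x with _ | y
      · rfl
      · rw [colVal_cons_E_succ, ih hν.2 (by simpa using hx), cutProfile_colVal_cons_E]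
    | N =>
      rcases p with _ | ⟨_ | _ | _, q⟩
      · simp at hx
      · rcases x with _ | y
        · rw [colVal_cons_N, ih hν.2 (by simpa using hx), cutProfile_colVal_cons_N_zero,
            cutProfile_colVal_cons_N_zero, colVal_cons_N]
        · rw [colVal_cons_N, ih hν.2 (by simpa using hx), cutProfile_colVal_cons_N_succ (N :: q)]
      · exact absurd rfl (hne q rfl)
      · simp at hν

end CutPeaks

section Schroder

theorem weaklyAbove_iff {π ρ : List Step} (hE : eLen π = eLen ρ) (hN : nLen π = nLen ρ) :
    WeaklyAbove π ρ ↔ ∀ y < eLen ρ, colVal ρ y ≤ colVal π y := by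
  refine ⟨fun h y _ => h y, fun h y => ?_⟩
  rcases lt_or_ge y (eLen ρ) with hy | hy
  · exact h y hy
  · rw [colVal_of_eLen_le hy, colVal_of_eLen_le (hE ▸ hy), hN]

theorem isSmallSchroder_iff {ν π : List Step} :
    IsSmallSchroder ν π ↔ PathAbove (colVal ν) (eLen ν) (nLen ν) π :=
  and_congr_right fun hE => and_congr_right fun hN => weaklyAbove_iff hE hN

theorem isLargeSchroder_iff {ν π : List Step} (hν : D ∉ ν) :
    IsLargeSchroder ν π ↔ PathAbove (cutProfile (colVal ν)) (eLen ν) (nLen ν) π :=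
  and_congr_right fun hE => and_congr_right fun hN => by
    rw [weaklyAbove_iff (hE.trans (eLen_cutPeaks ν).symm) (hN.trans (nLen_cutPeaks ν).symm),
      eLen_cutPeaks]
    exact forall₂_congr fun y hy => by rw [colVal_cutPeaks hν hy]

theorem head?_eq_N_iff {ν : List Step} (hν : D ∉ ν) (hb : 0 < eLen ν) :
    ν.head? = some N ↔ 0 < colVal ν 0 := by
  rcases ν with _ | ⟨_ | _ | _, p⟩ <;> simp_all

theorem getLast?_eq_E_iff {ν : List Step} (hν : D ∉ ν) (hb : 0 < eLen ν) (ha : 0 < nLen ν) :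
    ν.getLast? = some E ↔
      IsEmpty {π // PathAbove (cutProfile (colVal ν)) (eLen ν) (nLen ν - 1) π} := by
  obtain rfl | ⟨ρ, s, rfl⟩ := List.eq_nil_or_concat' ν
  · simp at hb
  cases s with
  | D => simp at hν
  | E =>
    simp only [List.getLast?_concat, true_iff]
    refine ⟨fun ⟨π, _, hN, hπ⟩ => ?_⟩
    have h₁ := hπ (eLen ρ) (by simp)
    have h₂ := cutProfile_eq_or (colVal (ρ ++ [E])) (eLen ρ)
    have h₃ := colVal_le_two_nLen π (eLen ρ)
    rw [colVal_append_E] at h₂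
    have : nLen (ρ ++ [E]) = nLen ρ := by simp
    omega
  | N =>
    simp only [List.getLast?_concat, reduceCtorEq, Option.some.injEq, false_iff, not_isEmpty_iff]
    refine ⟨⟨ρ, by simp, by simp, fun y hy => ?_⟩⟩
    rw [← colVal_append_of_lt [N] (by simpa using hy)]
    rcases cutProfile_eq_or (colVal (ρ ++ [N])) y with h | h <;> omega

end Schroder

/-- The number of large ν-Schröder paths equals twice the number of small
ν-Schröder paths if and only if ν begins with a north step and ends with an east step. -/
theorem large_eq_twice_small_iff (ν : List Step) (hν : IsLatticePath ν) :
    Nat.card {π : List Step // IsLargeSchroder ν π}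
        = 2 * Nat.card {π : List Step // IsSmallSchroder ν π} ↔
      (ν.head? = some Step.N ∧ ν.getLast? = some Step.E) := by
  simp only [isSmallSchroder_iff, isLargeSchroder_iff hν, card_pathAbove]
  have hw := even_colVal hν
  rcases Nat.eq_zero_or_pos (eLen ν) with hb | hb
  · have hE : E ∉ ν := List.count_eq_zero.1 (by simp_all [eLen])
    rw [hb]
    exact iff_of_false (by simp [pathCount]) fun h => hE (List.mem_of_getLast? h.2)
  by_cases hN : ν.head? = some N
  · have h0 := (head?_eq_N_iff hν hb).1 hN
    have ha : 0 < nLen ν := by linarith [colVal_le_two_nLen ν 0]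
    obtain ⟨x, hx⟩ := Nat.exists_eq_add_one.2 hb
    obtain ⟨t, ht⟩ := Nat.exists_eq_add_one.2 ha
    have hd := defect_pathCount_cutProfile_eq_zero hw h0 x (t + 1)
    rw [getLast?_eq_E_iff hν hb ha, ← Finite.card_eq_zero_iff, card_pathAbove, hx, ht]
    simp only [defect] at hd
    simp only [hN, true_and, Nat.add_sub_cancel]
    omega
  · have h0 : colVal ν 0 = 0 := by rw [head?_eq_N_iff hν hb] at hN; omega
    have hd := defect_pathCount_pos hw (cutProfile_eq_or _) h0 hb (t := nLen ν)
      fun y _ => colVal_le_two_nLen ν y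
    simp only [hN, false_and, iff_false]
    generalize nLen ν = a at hd
    cases a <;> simp only [defect] at hd <;> omega
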